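/- Let G be a finite simple graph, d ≥ 1 an integer, and T a nonempty set of vertices of G such that at least 2d+2 vertices of V(G) ∖ T have neighborhood exactly T. Then T is monochromatic, and for every d-cut (A, B) of G and every vertex u with N(u) = T, either every edge between u and T belongs to E(A, B) or no edge between u and T belongs to E(A, B). -/

import Mathlib

variable {V : Type*}

/-- A `d`-cut of a simple graph `G`: a partition `(A, B)` of the vertex set into two
nonempty parts such that every vertex of `A` has at most `d` neighbors in `B` and
every vertex of `B` has at most `d` neighbors in `A`. -/
def IsDCut (G : SimpleGraph V) (d : ℕ) (A B : Set V) : Prop :=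
  A.Nonempty ∧ B.Nonempty ∧ Disjoint A B ∧ A ∪ B = Set.univ ∧
    (∀ v ∈ A, (G.neighborSet v ∩ B).ncard ≤ d) ∧
    (∀ v ∈ B, (G.neighborSet v ∩ A).ncard ≤ d)

/-- A vertex set `T` is monochromatic if every `d`-cut of `G` has `T` entirely on one side. -/
def Monochromatic (G : SimpleGraph V) (d : ℕ) (T : Set V) : Prop :=
  ∀ A B : Set V, IsDCut G d A B → T ⊆ A ∨ T ⊆ B

/-- The edge cut of a cut `(A, B)`: the set of edges of `G` with one endpoint in `A`
and the other endpoint in `B`. -/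
def edgeCut (G : SimpleGraph V) (A B : Set V) : Set (Sym2 V) :=
  {e | e ∈ G.edgeSet ∧ ∃ u v, e = s(u, v) ∧ u ∈ A ∧ v ∈ B}

/-- A minimal `d`-cut: no `d`-cut has an edge cut that is a proper subset of its edge cut. -/
def IsMinimalDCut (G : SimpleGraph V) (d : ℕ) (A B : Set V) : Prop :=
  IsDCut G d A B ∧ ∀ A' B' : Set V, IsDCut G d A' B' → ¬ edgeCut G A' B' ⊂ edgeCut G A B

/-- A maximal `d`-cut: no `d`-cut has an edge cut that properly contains its edge cut. -/
def IsMaximalDCut (G : SimpleGraph V) (d : ℕ) (A B : Set V) : Prop :=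
  IsDCut G d A B ∧ ∀ A' B' : Set V, IsDCut G d A' B' → ¬ edgeCut G A B ⊂ edgeCut G A' B'

/-
If `T` met both sides of a `d`-cut, say `a ∈ T ∩ A` and `b ∈ T ∩ B`, then every vertex adjacent
to all of `T` is a neighbour of both `a` and `b`; so at most `d` such vertices lie in `B` (they are
neighbours of `a ∈ A`) and at most `d` lie in `A`, at most `2d` in all. Once `T` lies on one side,
an edge `uw` with `w ∈ T` crosses the cut exactly when `u` lies on the other side, whatever `w` is.
-/

section DCut

variable {G : SimpleGraph V} {d : ℕ} {A B S : Set V}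

theorem IsDCut.isCompl (h : IsDCut G d A B) : IsCompl A B :=
  ⟨h.2.2.1, codisjoint_iff.2 h.2.2.2.1⟩

theorem IsDCut.symm (h : IsDCut G d A B) : IsDCut G d B A :=
  let ⟨hA, hB, hdisj, hcover, hdA, hdB⟩ := h
  ⟨hB, hA, hdisj.symm, Set.union_comm A B ▸ hcover, hdB, hdA⟩

theorem IsDCut.ncard_inter_right_le [Finite V] (h : IsDCut G d A B) {a : V} (ha : a ∈ A)
    (hS : ∀ v ∈ S, G.Adj a v) : (S ∩ B).ncard ≤ d :=
  calc (S ∩ B).ncard ≤ (G.neighborSet a ∩ B).ncard :=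
        Set.ncard_le_ncard (Set.inter_subset_inter_left B hS)
    _ ≤ d := h.2.2.2.2.1 a ha

theorem IsDCut.ncard_le_of_forall_adj [Finite V] (h : IsDCut G d A B) {a b : V} (ha : a ∈ A)
    (hb : b ∈ B) (hS : ∀ v ∈ S, G.Adj a v ∧ G.Adj b v) : S.ncard ≤ 2 * d := by
  have hSB : (S ∩ B).ncard ≤ d := h.ncard_inter_right_le ha fun v hv => (hS v hv).1
  have hSA : (S ∩ A).ncard ≤ d := h.symm.ncard_inter_right_le hb fun v hv => (hS v hv).2
  calc S.ncard = (S ∩ A ∪ S ∩ B).ncard := by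
        rw [← Set.inter_union_distrib_left, h.2.2.2.1, Set.inter_univ]
    _ ≤ (S ∩ A).ncard + (S ∩ B).ncard := Set.ncard_union_le _ _
    _ ≤ 2 * d := by omega

end DCut

theorem monochromatic_of_two_mul_lt_ncard [Finite V] {G : SimpleGraph V} {d : ℕ} {T S : Set V}
    (hS : ∀ v ∈ S, T ⊆ G.neighborSet v) (hcard : 2 * d < S.ncard) : Monochromatic G d T := by
  intro A B h
  by_contra! hsplit
  obtain ⟨⟨a, haT, haA⟩, ⟨b, hbT, hbB⟩⟩ := And.imp Set.not_subset.mp Set.not_subset.mp hsplit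
  have hb : b ∈ A := by rw [h.isCompl.eq_compl]; exact hbB
  have ha : a ∈ B := by rw [← h.isCompl.compl_eq]; exact haA
  have := h.ncard_le_of_forall_adj hb ha fun v hv => ⟨(hS v hv hbT).symm, (hS v hv haT).symm⟩
  omega

theorem mem_edgeCut_compl_iff {G : SimpleGraph V} {A : Set V} {u w : V} :
    s(u, w) ∈ edgeCut G A Aᶜ ↔ G.Adj u w ∧ (u ∈ A ↔ w ∉ A) := by
  simp only [edgeCut, Set.mem_ofPred_eq, SimpleGraph.mem_edgeSet, Sym2.eq_iff, Set.mem_compl_iff]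
  constructor
  · rintro ⟨hadj, p, q, ⟨rfl, rfl⟩ | ⟨rfl, rfl⟩, hp, hq⟩ <;> tauto
  · rintro ⟨hadj, hiff⟩
    by_cases hu : u ∈ A
    · exact ⟨hadj, u, w, Or.inl ⟨rfl, rfl⟩, hu, hiff.1 hu⟩
    · exact ⟨hadj, w, u, Or.inr ⟨rfl, rfl⟩, not_not.1 (mt hiff.2 hu), hu⟩

theorem forall_mem_edgeCut_or_forall_not_mem_edgeCut {G : SimpleGraph V} {A B T : Set V} {u : V}
    (hAB : IsCompl A B) (hT : T ⊆ A ∨ T ⊆ B) (hu : T ⊆ G.neighborSet u) :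
    (∀ w ∈ T, s(u, w) ∈ edgeCut G A B) ∨ (∀ w ∈ T, s(u, w) ∉ edgeCut G A B) := by
  obtain rfl := hAB.compl_eq
  simp only [mem_edgeCut_compl_iff]
  by_cases huA : u ∈ A <;> rcases hT with hTA | hTB
  · exact Or.inr fun w hw ⟨_, hiff⟩ => hiff.1 huA (hTA hw)
  · exact Or.inl fun w hw => ⟨hu hw, iff_of_true huA (hTB hw)⟩
  · exact Or.inl fun w hw => ⟨hu hw, iff_of_false huA (not_not.2 (hTA hw))⟩
  · exact Or.inr fun w hw ⟨_, hiff⟩ => huA (hiff.2 (hTB hw))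

theorem exact_neighborhood_mono_all_or_nothing [Fintype V] (G : SimpleGraph V) (d : ℕ)
    (T : Set V)
    (hmany : 2 * d + 2 ≤ {v | v ∉ T ∧ G.neighborSet v = T}.ncard) :
    Monochromatic G d T ∧
    (∀ A B : Set V, IsDCut G d A B → ∀ u : V, G.neighborSet u = T →
      ((∀ w ∈ T, s(u, w) ∈ edgeCut G A B) ∨ (∀ w ∈ T, s(u, w) ∉ edgeCut G A B))) := by
  have hmono : Monochromatic G d T :=
    monochromatic_of_two_mul_lt_ncard (S := {v | v ∉ T ∧ G.neighborSet v = T})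
      (fun v hv => hv.2.ge) (by omega)
  exact ⟨hmono, fun A B h u hu =>
    forall_mem_edgeCut_or_forall_not_mem_edgeCut h.isCompl (hmono A B h) hu.ge⟩
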